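/- For 0 < α < 1, integer n ≥ 1 and γ > 0: d^n/dγ^n (e^{−γ^α}) = (−1)^n e^{−γ^α} Σ_{k=1}^n α^k S_α(n,k) γ^{kα−n}, where S_α(n,k) = (1/(α^k k!)) Σ_{j=0}^{k} (−1)^j binom(k,j)(−jα)_n. -/

import Mathlib

/-!
Induction on `n`: if the `n`-th derivative of `exp (-t ^ α)` is `(-1) ^ n exp (-t ^ α)` times
`∑ k ≤ n, α ^ k S_α(n,k) t ^ (kα - n)`, differentiating once more produces the coefficients
`α ^ (k+1) S_α(n,k) + (n - (k+1)α) α ^ (k+1) S_α(n,k+1)`, which is the triangular recurrence of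
`S_α`. The recurrence comes from `(k+1) C(k,j) = (k+1-j) C(k+1,j)` applied to the defining sums.
The boundary terms vanish because `S_α(n,0) = 0 ^ n` and, for `k > n`, `S_α(n,k) = 0`: up to sign
and scaling it is the `k`-th forward difference at `0` of a polynomial of degree `n` in `j`.
-/

open Finset Real

/-- generalized Stirling number S_α(n,k) of Pitman -/
noncomputable def genStirling (α : ℝ) (n k : ℕ) : ℝ :=
  (1 / (α ^ k * (Nat.factorial k : ℝ))) *
    ∑ j ∈ Finset.range (k + 1),
      (-1 : ℝ) ^ j * (Nat.choose k j : ℝ) * ∏ i ∈ Finset.range n, (-(j : ℝ) * α + i)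

open scoped Nat
open Polynomial

noncomputable def genStirlingNumerator (α : ℝ) (n k : ℕ) : ℝ :=
  ∑ j ∈ range (k + 1),
    (-1 : ℝ) ^ j * (k.choose j : ℝ) * ∏ i ∈ range n, (-(j : ℝ) * α + i)

theorem genStirling_eq_div (α : ℝ) (n k : ℕ) :
    genStirling α n k = genStirlingNumerator α n k / (α ^ k * k !) := by
  rw [genStirling, genStirlingNumerator, one_div_mul_eq_div]

theorem genStirlingNumerator_eq_neg_one_pow_mul_fwdDiff (α : ℝ) (n k : ℕ) :
    genStirlingNumerator α n k =
      (-1) ^ k * (fwdDiff 1)^[k] (∏ i ∈ range n, (-X * C α + C (i : ℝ))).eval 0 := by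
  rw [fwdDiff_iter_eq_sum_shift, genStirlingNumerator, mul_sum]
  refine sum_congr rfl fun j hj => ?_
  obtain ⟨d, rfl⟩ := Nat.exists_eq_add_of_le (Nat.lt_succ_iff.mp (mem_range.mp hj))
  have hsq : ((-1 : ℝ) ^ d) * (-1) ^ d = 1 := by rw [← mul_pow]; norm_num
  simp only [eval_prod, eval_add, eval_mul, eval_neg, eval_C, eval_X, zero_add, zsmul_eq_mul,
    nsmul_eq_mul, mul_one, Nat.add_sub_cancel_left, pow_add]
  push_cast
  linear_combination
    (-((-1) ^ j * ((j + d).choose j : ℝ) * ∏ i ∈ range n, (-(j : ℝ) * α + i))) * hsq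

theorem genStirlingNumerator_eq_zero_of_lt (α : ℝ) {n k : ℕ} (h : n < k) :
    genStirlingNumerator α n k = 0 := by
  have hlin (i : ℕ) : (-X * C α + C (i : ℝ)).natDegree ≤ 1 := by
    rw [show -X * C α + C (i : ℝ) = C (-α) * X + C (i : ℝ) by rw [C_neg]; ring]
    exact natDegree_linear_le
  have hdeg : (∏ i ∈ range n, (-X * C α + C (i : ℝ))).natDegree < k := by
    refine lt_of_le_of_lt ?_ h
    simpa using (natDegree_prod_le _ _).trans (sum_le_sum fun i (_ : i ∈ range n) => hlin i)
  rw [genStirlingNumerator_eq_neg_one_pow_mul_fwdDiff,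
    fwdDiff_iter_eq_zero_of_degree_lt hdeg, Pi.zero_apply, mul_zero]

theorem genStirlingNumerator_succ_succ (α : ℝ) (n k : ℕ) :
    genStirlingNumerator α (n + 1) (k + 1) =
      α * (k + 1) * genStirlingNumerator α n k +
        (n - (k + 1) * α) * genStirlingNumerator α n (k + 1) := by
  set p : ℕ → ℝ := fun j => ∏ i ∈ range n, (-(j : ℝ) * α + i)
  have hchoose (j : ℕ) (hj : j ∈ range (k + 2)) :
      ((k + 1).choose j : ℝ) * (-(j : ℝ) * α + n) =
        α * (k + 1) * k.choose j + (n - (k + 1) * α) * (k + 1).choose j := by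
    have h := Nat.choose_mul_succ_eq k j
    rw [← Nat.cast_inj (R := ℝ)] at h
    push_cast [Nat.cast_sub (mem_range_succ_iff.mp hj)] at h
    linear_combination (-α) * h
  calc genStirlingNumerator α (n + 1) (k + 1)
      = ∑ j ∈ range (k + 2), (-1) ^ j * ((k + 1).choose j * (-(j : ℝ) * α + n)) * p j := by
        refine sum_congr rfl fun j _ => ?_
        rw [prod_range_succ]
        ring
    _ = ∑ j ∈ range (k + 2), (α * (k + 1) * ((-1) ^ j * k.choose j * p j) +
          (n - (k + 1) * α) * ((-1) ^ j * (k + 1).choose j * p j)) := by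
        refine sum_congr rfl fun j hj => ?_
        rw [hchoose j hj]
        ring
    _ = _ := by
        rw [sum_add_distrib, ← mul_sum, ← mul_sum, sum_range_succ _ (k + 1),
          Nat.choose_succ_self]
        simp [genStirlingNumerator, p]

theorem genStirling_zero_right (α : ℝ) (n : ℕ) : genStirling α n 0 = 0 ^ n := by
  cases n <;> simp [genStirling, prod_range_succ']

theorem genStirling_eq_zero_of_lt (α : ℝ) {n k : ℕ} (h : n < k) : genStirling α n k = 0 := by
  rw [genStirling_eq_div, genStirlingNumerator_eq_zero_of_lt α h, zero_div]

theorem pow_mul_genStirling_succ_succ (α : ℝ) (n k : ℕ) :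
    α ^ (k + 1) * genStirling α (n + 1) (k + 1) =
      α * (α ^ k * genStirling α n k) +
        (n - (k + 1) * α) * (α ^ (k + 1) * genStirling α n (k + 1)) := by
  rcases eq_or_ne α 0 with rfl | hα
  · simp
  simp only [genStirling_eq_div, genStirlingNumerator_succ_succ, Nat.factorial_succ]
  push_cast
  field_simp

theorem sum_range_sub_mul_pow_mul_genStirling_shift (α : ℝ) (n : ℕ) (e : ℕ → ℝ) :
    ∑ k ∈ range (n + 1),
        (n - (k + 1) * α) * (α ^ (k + 1) * genStirling α n (k + 1)) * e (k + 1) =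
      ∑ k ∈ range (n + 1), (n - k * α) * (α ^ k * genStirling α n k) * e k := by
  have hbot : (n - ((0 : ℕ) : ℝ) * α) * (α ^ 0 * genStirling α n 0) * e 0 = 0 := by
    cases n <;> simp [genStirling_zero_right]
  have htop : (n - ((n + 1 : ℕ) : ℝ) * α) * (α ^ (n + 1) * genStirling α n (n + 1)) *
      e (n + 1) = 0 := by
    simp [genStirling_eq_zero_of_lt α n.lt_succ_self]
  have h := (sum_range_succ' (fun k : ℕ => (n - k * α) * (α ^ k * genStirling α n k) * e k)
    (n + 1)).symm.trans (sum_range_succ _ (n + 1))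
  rw [hbot, htop, add_zero, add_zero] at h
  simpa only [Nat.cast_add, Nat.cast_one] using h

noncomputable def genStirlingPowSum (α : ℝ) (n : ℕ) (t : ℝ) : ℝ :=
  ∑ k ∈ range (n + 1), α ^ k * genStirling α n k * t ^ ((k : ℝ) * α - n)

theorem hasDerivAt_genStirlingPowSum (α : ℝ) (n : ℕ) {t : ℝ} (ht : 0 < t) :
    HasDerivAt (genStirlingPowSum α n)
      (∑ k ∈ range (n + 1),
        α ^ k * genStirling α n k * (((k : ℝ) * α - n) * t ^ ((k : ℝ) * α - n - 1))) t :=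
  HasDerivAt.fun_sum fun _ _ => (hasDerivAt_rpow_const (Or.inl ht.ne')).const_mul _

theorem genStirlingPowSum_succ (α : ℝ) (n : ℕ) {t : ℝ} (ht : 0 < t) :
    genStirlingPowSum α (n + 1) t = α * t ^ (α - 1) * genStirlingPowSum α n t -
      ∑ k ∈ range (n + 1),
        α ^ k * genStirling α n k * (((k : ℝ) * α - n) * t ^ ((k : ℝ) * α - n - 1)) := by
  set c : ℕ → ℝ := fun k => α ^ k * genStirling α n k
  set e : ℕ → ℝ := fun k => t ^ ((k : ℝ) * α - (n + 1))
  calc genStirlingPowSum α (n + 1) t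
      = ∑ k ∈ range (n + 1), α ^ (k + 1) * genStirling α (n + 1) (k + 1) * e (k + 1) := by
        rw [genStirlingPowSum, sum_range_succ']
        simp [genStirling_zero_right, e]
    _ = α * ∑ k ∈ range (n + 1), c k * e (k + 1) +
          ∑ k ∈ range (n + 1), (n - (k + 1) * α) * c (k + 1) * e (k + 1) := by
        rw [mul_sum, ← sum_add_distrib]
        refine sum_congr rfl fun k _ => ?_
        rw [pow_mul_genStirling_succ_succ]
        ring
    _ = _ := by
        rw [sum_range_sub_mul_pow_mul_genStirling_shift, genStirlingPowSum, mul_sum, mul_sum,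
          ← sum_add_distrib, ← sum_sub_distrib]
        refine sum_congr rfl fun k _ => ?_
        have hpow : t ^ (α - 1) * t ^ ((k : ℝ) * α - n) = e (k + 1) := by
          rw [← rpow_add ht]
          simp only [e]
          congr 1
          push_cast
          ring
        have hpow' : t ^ ((k : ℝ) * α - n - 1) = e k := by
          simp only [e]
          congr 1
          ring
        linear_combination (-(α * c k)) * hpow + ((k : ℝ) * α - n) * c k * hpow'

theorem hasDerivAt_exp_neg_rpow_mul_genStirlingPowSum (α : ℝ) (n : ℕ) {t : ℝ} (ht : 0 < t) :
    HasDerivAt (fun s => (-1) ^ n * exp (-s ^ α) * genStirlingPowSum α n s)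
      ((-1) ^ (n + 1) * exp (-t ^ α) * genStirlingPowSum α (n + 1) t) t := by
  have hexp : HasDerivAt (fun s => exp (-s ^ α)) (exp (-t ^ α) * -(α * t ^ (α - 1))) t :=
    (hasDerivAt_rpow_const (Or.inl ht.ne')).neg.exp
  refine ((hexp.const_mul ((-1 : ℝ) ^ n)).fun_mul
    (hasDerivAt_genStirlingPowSum α n ht)).congr_deriv ?_
  rw [genStirlingPowSum_succ α n ht]
  ring

theorem iteratedDeriv_eqOn_of_hasDerivAt {𝕜 F : Type*} [NontriviallyNormedField 𝕜]
    [NormedAddCommGroup F] [NormedSpace 𝕜 F] {f : 𝕜 → F} {s : Set 𝕜} (hs : IsOpen s)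
    (g : ℕ → 𝕜 → F) (hf : Set.EqOn f (g 0) s)
    (hg : ∀ n, ∀ x ∈ s, HasDerivAt (g n) (g (n + 1) x) x) (n : ℕ) :
    Set.EqOn (iteratedDeriv n f) (g n) s := by
  induction n with
  | zero => simpa using hf
  | succ n ih =>
    intro x hx
    rw [iteratedDeriv_succ]
    exact ((hg n x hx).congr_of_eventuallyEq (ih.eventuallyEq_of_mem (hs.mem_nhds hx))).deriv

theorem iteratedDeriv_stretched_exp_general (α : ℝ)
    (n : ℕ) (hn : 1 ≤ n) (γ : ℝ) (hγ : 0 < γ) :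
    iteratedDeriv n (fun t : ℝ => Real.exp (-(t ^ α))) γ
      = (-1 : ℝ) ^ n * Real.exp (-(γ ^ α)) *
          ∑ k ∈ Finset.Icc 1 n,
            α ^ k * genStirling α n k * γ ^ ((k : ℝ) * α - n) := by
  have hderiv := iteratedDeriv_eqOn_of_hasDerivAt (f := fun t => exp (-t ^ α)) isOpen_Ioi
    (fun n t => (-1) ^ n * exp (-t ^ α) * genStirlingPowSum α n t)
    (fun _ _ => by simp [genStirlingPowSum, genStirling_zero_right])
    (fun n _ ht => hasDerivAt_exp_neg_rpow_mul_genStirlingPowSum α n ht) n hγ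
  rw [hderiv]
  dsimp only
  rw [genStirlingPowSum, Nat.range_succ_eq_Icc_zero, ← insert_Icc_add_one_left_eq_Icc n.zero_le,
    sum_insert (by simp), zero_add]
  simp [genStirling_zero_right, Nat.one_le_iff_ne_zero.mp hn]

/-- derivatives of the stretched exponential:
dⁿ/dγⁿ e^{−γ^α} = (−1)ⁿ e^{−γ^α} Σ_{k=1}^n α^k S_α(n,k) γ^{kα−n}, for γ > 0. -/
theorem iteratedDeriv_stretched_exp (α : ℝ) (hα₀ : 0 < α) (hα₁ : α < 1)
    (n : ℕ) (hn : 1 ≤ n) (γ : ℝ) (hγ : 0 < γ) :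
    iteratedDeriv n (fun t : ℝ => Real.exp (-(t ^ α))) γ
      = (-1 : ℝ) ^ n * Real.exp (-(γ ^ α)) *
          ∑ k ∈ Finset.Icc 1 n,
            α ^ k * genStirling α n k * γ ^ ((k : ℝ) * α - n) :=
  iteratedDeriv_stretched_exp_general α n hn γ hγ
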